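/- Let X ⊆ ℝⁿ be a nonempty compact convex set and f : ℝⁿ → ℝ twice continuously differentiable with μ·I ⪯ ∇²f(x) ⪯ L·I for all x ∈ X (0 < μ ≤ L). Fix x_k ∈ X, a symmetric positive definite H_k, and set η_k := max{λ_max(H_k⁻¹∇²f(x_k)), λ_max((∇²f(x_k))⁻¹H_k)}. Let f̂_k(x) := f(x_k) + ⟨∇f(x_k), x − x_k⟩ + ½‖x − x_k‖²_{H_k} with minimizer x̃*_{k+1} over X. Then every y ∈ X with f̂_k(y) ≤ f̂_k(x_k) satisfies ‖y − x̃*_{k+1}‖ ≤ √(2η_k/μ) · ‖∇f(x_k)‖^{1/2} · ‖x̃*_{k+1} − x_k‖^{1/2}. -/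

import Mathlib

open Matrix
open scoped RealInnerProductSpace

/-- The largest (real) eigenvalue of a matrix, as the supremum of its real spectrum. -/
noncomputable def lamMax {n : ℕ} (M : Matrix (Fin n) (Fin n) ℝ) : ℝ :=
  sSup (spectrum ℝ M)

/-- The smallest (real) eigenvalue of a matrix, as the infimum of its real spectrum. -/
noncomputable def lamMin {n : ℕ} (M : Matrix (Fin n) (Fin n) ℝ) : ℝ :=
  sInf (spectrum ℝ M)

/-- Action of a matrix on a vector of Euclidean space. -/
noncomputable def mApply {n : ℕ} (H : Matrix (Fin n) (Fin n) ℝ)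
    (v : EuclideanSpace ℝ (Fin n)) : EuclideanSpace ℝ (Fin n) :=
  Matrix.toEuclideanCLM (𝕜 := ℝ) H v

/-- The squared matrix "norm" ‖v‖²_H := vᵀ H v. -/
noncomputable def qForm {n : ℕ} (H : Matrix (Fin n) (Fin n) ℝ)
    (v : EuclideanSpace ℝ (Fin n)) : ℝ :=
  ⟪v, mApply H v⟫

/-- Spectral (ℓ² operator) norm of a matrix. -/
noncomputable def mNorm {n : ℕ} (H : Matrix (Fin n) (Fin n) ℝ) : ℝ :=
  ‖Matrix.toEuclideanCLM (𝕜 := ℝ) H‖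

/-!
The minimizer `x̃` of the quadratic model over the convex set `X` satisfies the variational
inequality `⟪∇f̂(x̃), w - x̃⟫ ≥ 0` on `X`; expanding `f̂` around `x̃` this gives
`f̂(x̃) + ½‖y - x̃‖²_H ≤ f̂(y) ≤ f̂(x_k)`, and since `f̂(x̃) ≥ f(x_k) - ‖∇f(x_k)‖‖x̃ - x_k‖` we get
`‖y - x̃‖²_H ≤ 2‖∇f(x_k)‖‖x̃ - x_k‖`. Finally `μ‖u‖² ≤ ‖u‖²_{∇²f(x_k)} ≤ η_k‖u‖²_H`, the second
inequality because `∇²f(x_k) ⪯ λ_max(H⁻¹∇²f(x_k)) • H`.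
-/

open Topology

theorem nonneg_of_forall_mul_add_sq_mul_nonneg {c q : ℝ}
    (h : ∀ t : ℝ, 0 < t → t ≤ 1 → 0 ≤ t * c + t ^ 2 * q) : 0 ≤ c := by
  have hlim : Filter.Tendsto (fun t : ℝ => c + t * q) (𝓝[>] 0) (𝓝 c) := by
    have : Continuous (fun t : ℝ => c + t * q) := by fun_prop
    simpa using (this.tendsto 0).mono_left nhdsWithin_le_nhds
  refine ge_of_tendsto hlim ?_
  filter_upwards [Ioc_mem_nhdsGT one_pos] with t ⟨ht0, ht1⟩
  have := h t ht0 ht1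
  rw [show t * c + t ^ 2 * q = t * (c + t * q) by ring] at this
  exact nonneg_of_mul_nonneg_right this ht0

theorem le_sqrt_of_mul_sq_le_mul {a μ η q c : ℝ} (hμ : 0 < μ) (hq : 0 ≤ q)
    (hμa : μ * a ^ 2 ≤ η * q) (hqc : q ≤ 2 * c) : a ≤ √(2 * η / μ * c) := by
  rcases le_or_gt η 0 with hη | hη
  · have hsq : a ^ 2 ≤ 0 :=
      nonpos_of_mul_nonpos_right (hμa.trans (mul_nonpos_of_nonpos_of_nonneg hη hq)) hμ
    rw [pow_eq_zero_iff two_ne_zero |>.mp (le_antisymm hsq (sq_nonneg a))]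
    exact Real.sqrt_nonneg _
  · refine Real.le_sqrt_of_sq_le ?_
    rw [div_mul_eq_mul_div, le_div_iff₀ hμ]
    nlinarith

section QuadraticModel

variable {E : Type*} [NormedAddCommGroup E] [InnerProductSpace ℝ E]

noncomputable def quadraticModel (c : ℝ) (g : E) (T : E →ₗ[ℝ] E) (a z : E) : ℝ :=
  c + ⟪g, z - a⟫ + 1 / 2 * ⟪z - a, T (z - a)⟫

variable {c : ℝ} {g : E} {T : E →ₗ[ℝ] E} {X : Set E} {a b : E}

theorem quadraticModel_self : quadraticModel c g T a a = c := by
  simp [quadraticModel]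

theorem quadraticModel_recenter (hT : T.IsSymmetric) (b z : E) :
    quadraticModel c g T a z =
      quadraticModel (quadraticModel c g T a b) (g + T (b - a)) T b z := by
  have hz : z - a = (b - a) + (z - b) := by abel
  have hsymm : ⟪T (b - a), z - b⟫ = ⟪b - a, T (z - b)⟫ := hT _ _
  simp only [quadraticModel, hz, map_add, inner_add_left, inner_add_right, hsymm,
    real_inner_comm (T (b - a)) (z - b)]
  ring

theorem inner_nonneg_of_isMinOn_quadraticModel (hX : Convex ℝ X) (hb : b ∈ X)
    (hmin : IsMinOn (quadraticModel c g T b) X b) {w : E} (hw : w ∈ X) : 0 ≤ ⟪g, w - b⟫ := by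
  refine nonneg_of_forall_mul_add_sq_mul_nonneg (q := 1 / 2 * ⟪w - b, T (w - b)⟫)
    fun t ht0 ht1 => ?_
  have hseg : t • (w - b) + b ∈ X := by
    simpa [AffineMap.lineMap_apply_module'] using hX.lineMap_mem hb hw ⟨ht0.le, ht1⟩
  have := isMinOn_iff.mp hmin _ hseg
  simp only [quadraticModel, sub_self, inner_zero_right, map_zero, add_sub_cancel_right,
    map_smul, inner_smul_left, inner_smul_right, conj_trivial] at this
  nlinarith

theorem quadraticModel_add_le_of_isMinOn (hT : T.IsSymmetric) (hX : Convex ℝ X) (hb : b ∈ X)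
    (hmin : IsMinOn (quadraticModel c g T a) X b) {w : E} (hw : w ∈ X) :
    quadraticModel c g T a b + 1 / 2 * ⟪w - b, T (w - b)⟫ ≤ quadraticModel c g T a w := by
  have hrec : quadraticModel c g T a =
      quadraticModel (quadraticModel c g T a b) (g + T (b - a)) T b :=
    funext (quadraticModel_recenter hT b)
  rw [hrec] at hmin ⊢
  have := inner_nonneg_of_isMinOn_quadraticModel hX hb hmin hw
  rw [quadraticModel_self]
  unfold quadraticModel
  linarith

theorem inner_le_of_isMinOn_quadraticModel_of_le (hT : T.IsPositive) (hX : Convex ℝ X)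
    (hb : b ∈ X) (hmin : IsMinOn (quadraticModel c g T a) X b) {y : E} (hy : y ∈ X)
    (hya : quadraticModel c g T a y ≤ c) : ⟪y - b, T (y - b)⟫ ≤ 2 * (‖g‖ * ‖b - a‖) := by
  have hgrowth := quadraticModel_add_le_of_isMinOn hT.isSymmetric hX hb hmin hy
  have hcs := (abs_le.mp (abs_real_inner_le_norm g (b - a))).1
  have hq := hT.inner_nonneg_right (b - a)
  rw [quadraticModel] at hgrowth
  linarith

end QuadraticModel

/- With `S = √B`, `B⁻¹A = S⁻¹(S⁻¹AS⁻¹)S` is similar to a symmetric matrix, and the bound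
`S⁻¹AS⁻¹ ⪯ λ_max • 1` is carried back to `A ⪯ λ_max • B` by congruence with `S`. -/
open scoped MatrixOrder in
theorem Matrix.IsHermitian.lamMax_inv_mul_smul_sub_posSemidef {n : ℕ}
    {A B : Matrix (Fin n) (Fin n) ℝ} (hA : A.IsHermitian) (hB : B.PosDef) :
    (lamMax (B⁻¹ * A) • B - A).PosSemidef := by
  set S := CFC.sqrt B
  have hS : S.IsHermitian := (CFC.sqrt_nonneg B).posSemidef.isHermitian
  have hSS : S * S = B := CFC.sqrt_mul_sqrt_self B hB.posSemidef.nonneg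
  have hSu : IsUnit S := (CFC.isUnit_sqrt_iff B hB.posSemidef.nonneg).mpr hB.isUnit
  have hSdet : IsUnit S.det := (S.isUnit_iff_isUnit_det).mp hSu
  set M := S⁻¹ * A * S⁻¹
  have hM : M.IsHermitian := by
    simp only [M, IsHermitian, conjTranspose_mul, conjTranspose_nonsing_inv, hS.eq, hA.eq,
      Matrix.mul_assoc]
  have hconj : B⁻¹ * A = S⁻¹ * M * S := by
    rw [← hSS, Matrix.mul_inv_rev]
    simp only [M, Matrix.mul_assoc, nonsing_inv_mul S hSdet, Matrix.mul_one]
  have hlam : lamMax (B⁻¹ * A) = lamMax M := by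
    rw [lamMax, lamMax, hconj, ← hSu.unit_spec, ← Matrix.coe_units_inv,
      spectrum.units_conjugate']
  have hle : M ≤ algebraMap ℝ _ (lamMax M) :=
    le_algebraMap_of_spectrum_le (fun x hx => le_csSup M.finite_real_spectrum.bddAbove hx)
      hM.isSelfAdjoint
  have hSMS : S * M * S = A := by
    simp only [M, ← Matrix.mul_assoc, mul_nonsing_inv S hSdet, Matrix.one_mul]
    simp only [Matrix.mul_assoc, nonsing_inv_mul S hSdet, Matrix.mul_one]
  have hcongr := (Matrix.le_iff.mp hle).conjTranspose_mul_mul_same S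
  rwa [hS.eq, Algebra.algebraMap_eq_smul_one, Matrix.mul_sub, Matrix.sub_mul, hSMS,
    Matrix.mul_smul, Matrix.mul_one, Matrix.smul_mul, hSS, ← hlam] at hcongr

section QForm

variable {n : ℕ}

theorem qForm_eq_inner_toEuclideanLin (H : Matrix (Fin n) (Fin n) ℝ)
    (v : EuclideanSpace ℝ (Fin n)) : qForm H v = ⟪v, Matrix.toEuclideanLin H v⟫ := rfl

theorem Matrix.PosSemidef.qForm_nonneg {H : Matrix (Fin n) (Fin n) ℝ} (hH : H.PosSemidef)
    (v : EuclideanSpace ℝ (Fin n)) : 0 ≤ qForm H v :=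
  (Matrix.isPositive_toEuclideanLin_iff.mpr hH).inner_nonneg_right v

theorem qForm_le_qForm_of_posSemidef_sub {A B : Matrix (Fin n) (Fin n) ℝ}
    (h : (B - A).PosSemidef) (v : EuclideanSpace ℝ (Fin n)) : qForm A v ≤ qForm B v := by
  have := h.qForm_nonneg v
  rw [qForm_eq_inner_toEuclideanLin, map_sub, LinearMap.sub_apply, inner_sub_right] at this
  rw [qForm_eq_inner_toEuclideanLin, qForm_eq_inner_toEuclideanLin]
  linarith

theorem qForm_smul (c : ℝ) (H : Matrix (Fin n) (Fin n) ℝ) (v : EuclideanSpace ℝ (Fin n)) :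
    qForm (c • H) v = c * qForm H v := by
  simp only [qForm_eq_inner_toEuclideanLin, map_smul, LinearMap.smul_apply, inner_smul_right]

theorem qForm_one (v : EuclideanSpace ℝ (Fin n)) : qForm 1 v = ‖v‖ ^ 2 := by
  simp [qForm_eq_inner_toEuclideanLin]

end QForm

theorem socgs_model_sublevel_distance_bound_general {n : ℕ}
    (X : Set (EuclideanSpace ℝ (Fin n)))
    (hconv : Convex ℝ X)
    (f : EuclideanSpace ℝ (Fin n) → ℝ)
    (Hess : EuclideanSpace ℝ (Fin n) → Matrix (Fin n) (Fin n) ℝ)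
    (μ L : ℝ) (hμ : 0 < μ)
    (hbound : ∀ x ∈ X, (Hess x - μ • (1 : Matrix (Fin n) (Fin n) ℝ)).PosSemidef ∧
      (L • (1 : Matrix (Fin n) (Fin n) ℝ) - Hess x).PosSemidef)
    (xk : EuclideanSpace ℝ (Fin n)) (hxk : xk ∈ X)
    (Hk : Matrix (Fin n) (Fin n) ℝ) (hHk : Hk.PosDef)
    (ηk : ℝ) (hηk : ηk = max (lamMax (Hk⁻¹ * Hess xk)) (lamMax ((Hess xk)⁻¹ * Hk)))
    (fhat : EuclideanSpace ℝ (Fin n) → ℝ)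
    (hfhat : ∀ x, fhat x =
      f xk + ⟪gradient f xk, x - xk⟫ + (1 / 2) * qForm Hk (x - xk))
    (xt : EuclideanSpace ℝ (Fin n)) (hxtX : xt ∈ X)
    (hxtmin : ∀ w ∈ X, fhat xt ≤ fhat w) :
    ∀ y ∈ X, fhat y ≤ fhat xk →
      ‖y - xt‖ ≤ Real.sqrt (2 * ηk / μ) *
        Real.sqrt ‖gradient f xk‖ * Real.sqrt ‖xt - xk‖ := by
  intro y hy hyk
  have hmodel : fhat = quadraticModel (f xk) (gradient f xk) (Matrix.toEuclideanLin Hk) xk :=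
    funext hfhat
  rw [hmodel, quadraticModel_self] at hyk
  rw [hmodel] at hxtmin
  have hmodel_le : qForm Hk (y - xt) ≤ 2 * (‖gradient f xk‖ * ‖xt - xk‖) :=
    inner_le_of_isMinOn_quadraticModel_of_le
      (Matrix.isPositive_toEuclideanLin_iff.mpr hHk.posSemidef) hconv hxtX
      (isMinOn_iff.mpr hxtmin) hy hyk
  have hHess : (Hess xk).IsHermitian := by
    simpa using (hbound xk hxk).1.isHermitian.add (isHermitian_one.smul (IsSelfAdjoint.all μ))
  have hlow : μ * ‖y - xt‖ ^ 2 ≤ qForm (Hess xk) (y - xt) := by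
    simpa [qForm_smul, qForm_one] using
      qForm_le_qForm_of_posSemidef_sub (hbound xk hxk).1 (y - xt)
  have hup : qForm (Hess xk) (y - xt) ≤ ηk * qForm Hk (y - xt) :=
    calc qForm (Hess xk) (y - xt)
        ≤ qForm (lamMax (Hk⁻¹ * Hess xk) • Hk) (y - xt) :=
          qForm_le_qForm_of_posSemidef_sub (hHess.lamMax_inv_mul_smul_sub_posSemidef hHk) _
      _ = lamMax (Hk⁻¹ * Hess xk) * qForm Hk (y - xt) := qForm_smul _ _ _
      _ ≤ ηk * qForm Hk (y - xt) :=
          mul_le_mul_of_nonneg_right (hηk ▸ le_max_left _ _) (hHk.posSemidef.qForm_nonneg _)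
  calc ‖y - xt‖ ≤ √(2 * ηk / μ * (‖gradient f xk‖ * ‖xt - xk‖)) :=
        le_sqrt_of_mul_sq_le_mul hμ (hHk.posSemidef.qForm_nonneg _)
          (hlow.trans hup) hmodel_le
    _ = √(2 * ηk / μ) * √‖gradient f xk‖ * √‖xt - xk‖ := by
        rw [Real.sqrt_mul' _ (by positivity), Real.sqrt_mul (norm_nonneg _), mul_assoc]

/-- with `μ·I ⪯ ∇²f ⪯ L·I` on `X` and `x̃*_{k+1}` the minimizer over `X` of
the quadratic model `f̂_k`, every `y ∈ X` with `f̂_k(y) ≤ f̂_k(x_k)` satisfies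
`‖y − x̃*_{k+1}‖ ≤ √(2η_k/μ)·‖∇f(x_k)‖^{1/2}·‖x̃*_{k+1} − x_k‖^{1/2}`. -/
theorem socgs_model_sublevel_distance_bound {n : ℕ}
    (X : Set (EuclideanSpace ℝ (Fin n)))
    (hne : X.Nonempty) (hcomp : IsCompact X) (hconv : Convex ℝ X)
    (f : EuclideanSpace ℝ (Fin n) → ℝ) (hf : ContDiff ℝ 2 f)
    (Hess : EuclideanSpace ℝ (Fin n) → Matrix (Fin n) (Fin n) ℝ)
    (hHess : ∀ x, HasFDerivAt (gradient f) (Matrix.toEuclideanCLM (𝕜 := ℝ) (Hess x)) x)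
    (μ L : ℝ) (hμ : 0 < μ) (hμL : μ ≤ L)
    (hbound : ∀ x ∈ X, (Hess x - μ • (1 : Matrix (Fin n) (Fin n) ℝ)).PosSemidef ∧
      (L • (1 : Matrix (Fin n) (Fin n) ℝ) - Hess x).PosSemidef)
    (xk : EuclideanSpace ℝ (Fin n)) (hxk : xk ∈ X)
    (Hk : Matrix (Fin n) (Fin n) ℝ) (hHk : Hk.PosDef)
    (ηk : ℝ) (hηk : ηk = max (lamMax (Hk⁻¹ * Hess xk)) (lamMax ((Hess xk)⁻¹ * Hk)))
    (fhat : EuclideanSpace ℝ (Fin n) → ℝ)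
    (hfhat : ∀ x, fhat x =
      f xk + ⟪gradient f xk, x - xk⟫ + (1 / 2) * qForm Hk (x - xk))
    (xt : EuclideanSpace ℝ (Fin n)) (hxtX : xt ∈ X)
    (hxtmin : ∀ w ∈ X, fhat xt ≤ fhat w) :
    ∀ y ∈ X, fhat y ≤ fhat xk →
      ‖y - xt‖ ≤ Real.sqrt (2 * ηk / μ) *
        Real.sqrt ‖gradient f xk‖ * Real.sqrt ‖xt - xk‖ :=
  socgs_model_sublevel_distance_bound_general X hconv f Hess μ L hμ hbound xk hxk Hk hHk ηk hηk fhat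
    hfhat xt hxtX hxtmin
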